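/- (Newton decrement bound for self-concordant functions.) Let D ⊆ ℝ^m be open and convex and let g : D → ℝ be convex, three times continuously differentiable, with ∇²g(x) positive definite for every x ∈ D, and self-concordant: |∇³g(x)[u,u,u]| ≤ 2(uᵀ∇²g(x)u)^{3/2} for all x ∈ D and u ∈ ℝ^m. Suppose g attains its minimum over D at a point x⁺ ∈ D. Define the local norm ‖v‖_x = √(vᵀ∇²g(x)v) and the Newton decrement λ(x, g) = ‖(∇²g(x))^{−1}∇g(x)‖_x. Then for every x ∈ D with λ(x, g) ≤ 1/2, one has ‖x − x⁺‖_x ≤ 2λ(x, g). -/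

import Mathlib

/-!
Along the segment `y t = x⁺ + t (x - x⁺)` put `A t = ⟪∇²g(y t) h, h⟫` with `h = x - x⁺`.
Self-concordance says `A' ≤ 2 A^{3/2}`, i.e. `t ↦ A t ^ (-1/2)` has slope `≥ -1`, which gives
`A t ≥ (1/r + 1 - t)⁻²` with `r = ‖h‖_x`. Integrating `A = d/dt ⟪∇g(y t), h⟫` over `[0, 1]` and
using `∇g(x⁺) = 0` yields `r² / (1 + r) ≤ ⟪∇g(x), h⟫ ≤ λ r` (Cauchy–Schwarz in the local norm),
hence `r ≤ λ / (1 - λ) ≤ 2λ` for `λ ≤ 1/2`.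
-/

open Set Filter Topology InnerProductSpace
open scoped RealInnerProductSpace

lemma monotoneOn_Icc_of_hasDerivAt_nonneg {f f' : ℝ → ℝ} {a b : ℝ}
    (hf : ∀ t ∈ Icc a b, HasDerivAt f (f' t) t) (hf' : ∀ t ∈ Icc a b, 0 ≤ f' t) :
    MonotoneOn f (Icc a b) :=
  monotoneOn_of_hasDerivWithinAt_nonneg (convex_Icc a b)
    (fun t ht => (hf t ht).continuousAt.continuousWithinAt)
    (fun t ht => (hf t (interior_subset ht)).hasDerivWithinAt)
    (fun t ht => hf' t (interior_subset ht))

section SelfConcordantOnInterval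

variable {φ A A' : ℝ → ℝ} {a b : ℝ}

lemma inv_sqrt_le_inv_sqrt_add_of_deriv_le
    (hA : ∀ t ∈ Icc a b, HasDerivAt A (A' t) t) (hpos : ∀ t ∈ Icc a b, 0 < A t)
    (hA' : ∀ t ∈ Icc a b, A' t ≤ 2 * A t ^ ((3 : ℝ) / 2)) {t : ℝ} (ht : t ∈ Icc a b) :
    (√(A t))⁻¹ ≤ (√(A b))⁻¹ + (b - t) := by
  have hderiv : ∀ s ∈ Icc a b, HasDerivAt (fun s => (√(A s))⁻¹ + s)
      (-(A' s / (2 * √(A s))) / √(A s) ^ 2 + 1) s := fun s hs =>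
    (((hA s hs).sqrt (hpos s hs).ne').inv (Real.sqrt_pos.2 (hpos s hs)).ne').add (hasDerivAt_id s)
  have hnonneg : ∀ s ∈ Icc a b, 0 ≤ -(A' s / (2 * √(A s))) / √(A s) ^ 2 + 1 := by
    intro s hs
    have hsqrt : 0 < √(A s) := Real.sqrt_pos.2 (hpos s hs)
    have hrpow : A s ^ ((3 : ℝ) / 2) = √(A s) ^ 3 := by
      rw [Real.sqrt_eq_rpow, ← Real.rpow_mul_natCast (hpos s hs).le]
      norm_num
    have h := hA' s hs
    rw [hrpow] at h
    have hslope : A' s / (2 * √(A s)) / √(A s) ^ 2 ≤ 1 := by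
      rw [div_div, div_le_one (by positivity)]
      nlinarith
    rw [neg_div]
    linarith
  have := monotoneOn_Icc_of_hasDerivAt_nonneg hderiv hnonneg ht (right_mem_Icc.2 (ht.1.trans ht.2))
    ht.2
  simp only at this
  linarith

/-- Integrating the lower bound `A t ≥ (A b ^ (-1/2) + (b - t))⁻²` of a self-concordant `A`. -/
lemma mul_div_one_add_le_sub_of_deriv_le (hab : a ≤ b)
    (hφ : ∀ t ∈ Icc a b, HasDerivAt φ (A t) t)
    (hA : ∀ t ∈ Icc a b, HasDerivAt A (A' t) t) (hpos : ∀ t ∈ Icc a b, 0 < A t)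
    (hA' : ∀ t ∈ Icc a b, A' t ≤ 2 * A t ^ ((3 : ℝ) / 2)) :
    (b - a) * A b / (1 + (b - a) * √(A b)) ≤ φ b - φ a := by
  have hb : b ∈ Icc a b := right_mem_Icc.2 hab
  set r := √(A b)
  have hr : 0 < r := Real.sqrt_pos.2 (hpos b hb)
  have hc : ∀ t ∈ Icc a b, 0 < r⁻¹ + (b - t) := fun t ht => by
    have := inv_pos.2 hr; linarith [ht.2]
  have hF : ∀ t ∈ Icc a b, HasDerivAt (fun s => φ s - (r⁻¹ + (b - s))⁻¹)
      (A t - ((r⁻¹ + (b - t)) ^ 2)⁻¹) t := fun t ht =>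
    ((hφ t ht).sub ((((hasDerivAt_id t).const_sub b).const_add r⁻¹).inv (hc t ht).ne')).congr_deriv
      (by simp only [id, neg_neg, one_div])
  have hF' : ∀ t ∈ Icc a b, 0 ≤ A t - ((r⁻¹ + (b - t)) ^ 2)⁻¹ := by
    intro t ht
    have hsqrt : 0 < √(A t) := Real.sqrt_pos.2 (hpos t ht)
    have hlow : (r⁻¹ + (b - t))⁻¹ ≤ √(A t) :=
      inv_le_of_inv_le₀ hsqrt (inv_sqrt_le_inv_sqrt_add_of_deriv_le hA hpos hA' ht)
    have := pow_le_pow_left₀ (by positivity [hc t ht]) hlow 2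
    rw [Real.sq_sqrt (hpos t ht).le, inv_pow] at this
    exact sub_nonneg.2 this
  have := monotoneOn_Icc_of_hasDerivAt_nonneg hF hF' (left_mem_Icc.2 hab) hb hab
  have hAb : A b = r ^ 2 := (Real.sq_sqrt (hpos b hb).le).symm
  have hfrac : (r⁻¹ + (b - a))⁻¹ = r / (1 + (b - a) * r) := by
    field_simp
  simp only [sub_self, add_zero, inv_inv, hfrac] at this
  have hden : 1 + (b - a) * r ≠ 0 := by nlinarith
  calc (b - a) * A b / (1 + (b - a) * r) = r - r / (1 + (b - a) * r) := by
        rw [hAb]; field_simp; ring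
    _ ≤ φ b - φ a := by linarith

end SelfConcordantOnInterval

lemma LinearMap.IsSymmetric.inner_le_sqrt_mul_sqrt {E : Type*} [NormedAddCommGroup E]
    [InnerProductSpace ℝ E] {T : E →ₗ[ℝ] E} (hT : T.IsSymmetric) (hnonneg : ∀ u, 0 ≤ ⟪T u, u⟫)
    (u v : E) : ⟪T u, v⟫ ≤ √⟪T u, u⟫ * √⟪T v, v⟫ := by
  have hsq : ⟪T u, v⟫ ^ 2 ≤ ⟪T u, u⟫ * ⟪T v, v⟫ := by
    have := LinearMap.BilinForm.apply_mul_apply_le_of_forall_zero_le ((innerₗ E).comp T) hnonneg u v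
    simp only [LinearMap.comp_apply, innerₗ_apply_apply] at this
    rwa [hT v u, real_inner_comm (T u) v, ← sq] at this
  rw [← Real.sqrt_mul (hnonneg u)]
  exact (le_abs_self _).trans (Real.abs_le_sqrt hsq)

section Hessian

variable {E : Type*} [NormedAddCommGroup E] [InnerProductSpace ℝ E] [CompleteSpace E]
  {D : Set E} {g : E → ℝ} {gg : E → E} {H : E → E →L[ℝ] E} {z : E}

lemma iteratedFDeriv_succ_apply_eq_inner_iteratedFDeriv_gradient
    (hgrad : ∀ᶠ y in 𝓝 z, HasGradientAt g (gg y) y) (n : ℕ) (m : Fin (n + 1) → E) :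
    iteratedFDeriv ℝ (n + 1) g z m = ⟪iteratedFDeriv ℝ n gg z (Fin.init m), m (Fin.last n)⟫ := by
  have hfderiv : (fun y => fderiv ℝ g y) =ᶠ[𝓝 z] (toDual ℝ E).toContinuousLinearEquiv ∘ gg :=
    hgrad.mono fun y hy => hy.hasFDerivAt.fderiv
  rw [iteratedFDeriv_succ_apply_right, (hfderiv.iteratedFDeriv ℝ n).eq_of_nhds,
    ContinuousLinearEquiv.iteratedFDeriv_comp_left]
  rfl

lemma contDiffAt_of_hasGradientAt {n : WithTop ℕ∞} (hg : ContDiffAt ℝ (n + 1) g z)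
    (hgrad : ∀ᶠ y in 𝓝 z, HasGradientAt g (gg y) y) : ContDiffAt ℝ n gg z := by
  have hfderiv : (toDual ℝ E).symm ∘ (fun y => fderiv ℝ g y) =ᶠ[𝓝 z] gg :=
    hgrad.mono fun y hy => by simp [hy.hasFDerivAt.fderiv]
  exact ((toDual ℝ E).symm.contDiff.contDiffAt.comp z (hg.fderiv_right le_rfl)).congr_of_eventuallyEq
    hfderiv.symm

lemma HasDerivAt.inner_hessian_apply {c : ℝ → E} {c' : E} {t : ℝ}
    (hc : HasDerivAt c c' t) (hg : ContDiffAt ℝ 3 g (c t))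
    (hgrad : ∀ᶠ y in 𝓝 (c t), HasGradientAt g (gg y) y)
    (hHess : ∀ᶠ y in 𝓝 (c t), HasFDerivAt gg (H y) y) (u v : E) :
    HasDerivAt (fun s => ⟪H (c s) u, v⟫) (iteratedFDeriv ℝ 3 g (c t) ![c', u, v]) t := by
  have hgg : ContDiffAt ℝ 2 gg (c t) := contDiffAt_of_hasGradientAt hg hgrad
  have hH : HasFDerivAt (fderiv ℝ gg) (fderiv ℝ (fderiv ℝ gg) (c t)) (c t) :=
    ((hgg.fderiv_right (m := 1) le_rfl).differentiableAt one_ne_zero).hasFDerivAt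
  have hderiv := ((hH.comp_hasDerivAt t hc).clm_apply (hasDerivAt_const t u)).inner ℝ
    (hasDerivAt_const t v)
  have hinit : Fin.init ![c', u, v] = ![c', u] := by
    ext i; fin_cases i <;> rfl
  rw [iteratedFDeriv_succ_apply_eq_inner_iteratedFDeriv_gradient hgrad, hinit,
    iteratedFDeriv_two_apply]
  refine (by simpa using hderiv : HasDerivAt _ _ t).congr_of_eventuallyEq ?_
  filter_upwards [hc.continuousAt.tendsto.eventually hHess] with s hs
  rw [hs.fderiv]

lemma IsLocalMin.hasGradientAt_eq_zero {x : E} (hmin : IsLocalMin g x)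
    (hgrad : HasGradientAt g (gg x) x) : gg x = 0 := by
  simpa using hmin.hasFDerivAt_eq_zero hgrad.hasFDerivAt

lemma inner_hessian_div_le_inner_gradient_sub (hD : IsOpen D) (hDconv : Convex ℝ D)
    (hg : ContDiffOn ℝ 3 g D) (hgrad : ∀ x ∈ D, HasGradientAt g (gg x) x)
    (hHess : ∀ x ∈ D, HasFDerivAt gg (H x) x) (hpos : ∀ x ∈ D, ∀ u, u ≠ 0 → 0 < ⟪H x u, u⟫)
    (hsc : ∀ x ∈ D, ∀ u, iteratedFDeriv ℝ 3 g x ![u, u, u] ≤ 2 * ⟪H x u, u⟫ ^ ((3 : ℝ) / 2))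
    {x x' : E} (hx : x ∈ D) (hx' : x' ∈ D) (hxx' : x ≠ x') :
    ⟪H x (x - x'), x - x'⟫ / (1 + √⟪H x (x - x'), x - x'⟫) ≤ ⟪gg x - gg x', x - x'⟫ := by
  set h := x - x'
  have h0 : h ≠ 0 := sub_ne_zero.2 hxx'
  set y : ℝ → E := fun t => x' + t • h
  have hy : ∀ t, HasDerivAt y h t := fun t => by
    simpa [y] using (hasDerivAt_id t).smul_const h
  have hyD : ∀ t ∈ Icc (0 : ℝ) 1, y t ∈ D := fun t ht => hDconv.add_smul_sub_mem hx' hx ht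
  have hφ : ∀ t ∈ Icc (0 : ℝ) 1, HasDerivAt (fun s => ⟪gg (y s), h⟫) ⟪H (y t) h, h⟫ t :=
    fun t ht => by
      simpa using ((hHess _ (hyD t ht)).comp_hasDerivAt t (hy t)).inner ℝ (hasDerivAt_const t h)
  have hA : ∀ t ∈ Icc (0 : ℝ) 1, HasDerivAt (fun s => ⟪H (y s) h, h⟫)
      (iteratedFDeriv ℝ 3 g (y t) ![h, h, h]) t := fun t ht =>
    (hy t).inner_hessian_apply (hg.contDiffAt (hD.mem_nhds (hyD t ht)))
      ((hD.eventually_mem (hyD t ht)).mono hgrad) ((hD.eventually_mem (hyD t ht)).mono hHess) h h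
  have := mul_div_one_add_le_sub_of_deriv_le zero_le_one hφ hA
    (fun t ht => hpos _ (hyD t ht) h h0) (fun t ht => hsc _ (hyD t ht) h)
  have hy0 : y 0 = x' := by simp [y]
  have hy1 : y 1 = x := by simp [y, h]
  simpa only [hy0, hy1, sub_zero, one_mul, inner_sub_left] using this

end Hessian

lemma le_two_mul_of_sq_div_one_add_le {r l : ℝ} (hr : 0 < r) (hl : l ≤ 1 / 2)
    (h : r ^ 2 / (1 + r) ≤ l * r) : r ≤ 2 * l := by
  rw [div_le_iff₀ (by positivity)] at h
  nlinarith

theorem newton_decrement_self_concordant_general {m : ℕ}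
    (D : Set (EuclideanSpace ℝ (Fin m))) (hD : IsOpen D) (hDconv : Convex ℝ D)
    (g : EuclideanSpace ℝ (Fin m) → ℝ)
    (hgC3 : ContDiffOn ℝ 3 g D)
    (gg : EuclideanSpace ℝ (Fin m) → EuclideanSpace ℝ (Fin m))
    (H Hinv : EuclideanSpace ℝ (Fin m) →
      (EuclideanSpace ℝ (Fin m) →L[ℝ] EuclideanSpace ℝ (Fin m)))
    (hgrad : ∀ x ∈ D, HasGradientAt g (gg x) x)
    (hHess : ∀ x ∈ D, HasFDerivAt gg (H x) x)
    (hsymm : ∀ x ∈ D, ∀ u v, ⟪H x u, v⟫ = ⟪u, H x v⟫)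
    (hpos : ∀ x ∈ D, ∀ u : EuclideanSpace ℝ (Fin m), u ≠ 0 → 0 < ⟪H x u, u⟫)
    (hHinv : ∀ x ∈ D, (∀ u, Hinv x (H x u) = u) ∧ (∀ u, H x (Hinv x u) = u))
    (hsc : ∀ x ∈ D, ∀ u : EuclideanSpace ℝ (Fin m),
      |iteratedFDeriv ℝ 3 g x ![u, u, u]| ≤ 2 * (⟪H x u, u⟫) ^ ((3:ℝ)/2))
    (xplus : EuclideanSpace ℝ (Fin m)) (hxplus : xplus ∈ D)
    (hmin : IsMinOn g D xplus) :
    ∀ x ∈ D,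
      Real.sqrt ⟪H x (Hinv x (gg x)), Hinv x (gg x)⟫ ≤ 1/2 →
      Real.sqrt ⟪H x (x - xplus), x - xplus⟫ ≤
        2 * Real.sqrt ⟪H x (Hinv x (gg x)), Hinv x (gg x)⟫ := by
  intro x hx hlam
  rcases eq_or_ne x xplus with rfl | hne
  · simp only [sub_self, map_zero, inner_zero_left, Real.sqrt_zero]
    positivity
  have hgain := inner_hessian_div_le_inner_gradient_sub hD hDconv hgC3 hgrad hHess hpos
    (fun y hy u => (le_abs_self _).trans (hsc y hy u)) hx hxplus hne
  have hgg0 : gg xplus = 0 := (hmin.isLocalMin (hD.mem_nhds hxplus)).hasGradientAt_eq_zero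
    (hgrad xplus hxplus)
  have hHsymm : (H x : EuclideanSpace ℝ (Fin m) →ₗ[ℝ] _).IsSymmetric := hsymm x hx
  have hHnonneg : ∀ u, 0 ≤ ⟪H x u, u⟫ := fun u => by
    rcases eq_or_ne u 0 with rfl | hu
    · simp
    · exact (hpos x hx u hu).le
  have hcs : ⟪gg x, x - xplus⟫ ≤
      √⟪H x (Hinv x (gg x)), Hinv x (gg x)⟫ * √⟪H x (x - xplus), x - xplus⟫ := by
    conv_lhs => rw [← (hHinv x hx).2 (gg x)]
    exact hHsymm.inner_le_sqrt_mul_sqrt hHnonneg _ _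
  have hr := hpos x hx _ (sub_ne_zero.2 hne)
  rw [hgg0, sub_zero] at hgain
  refine le_two_mul_of_sq_div_one_add_le (Real.sqrt_pos.2 hr) hlam ?_
  rw [Real.sq_sqrt hr.le]
  linarith

/-- Newton decrement bound for self-concordant functions: if
`λ(x, g) = ‖(∇²g(x))⁻¹ ∇g(x)‖_x ≤ 1/2` and `g` attains its minimum over its open convex
domain at `x⁺`, then `‖x − x⁺‖_x ≤ 2 λ(x, g)`, where `‖v‖_x = √(vᵀ ∇²g(x) v)`. -/
theorem newton_decrement_self_concordant {m : ℕ}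
    (D : Set (EuclideanSpace ℝ (Fin m))) (hD : IsOpen D) (hDconv : Convex ℝ D)
    (g : EuclideanSpace ℝ (Fin m) → ℝ)
    (hgconv : ConvexOn ℝ D g) (hgC3 : ContDiffOn ℝ 3 g D)
    (gg : EuclideanSpace ℝ (Fin m) → EuclideanSpace ℝ (Fin m))
    (H Hinv : EuclideanSpace ℝ (Fin m) →
      (EuclideanSpace ℝ (Fin m) →L[ℝ] EuclideanSpace ℝ (Fin m)))
    (hgrad : ∀ x ∈ D, HasGradientAt g (gg x) x)
    (hHess : ∀ x ∈ D, HasFDerivAt gg (H x) x)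
    (hsymm : ∀ x ∈ D, ∀ u v, ⟪H x u, v⟫ = ⟪u, H x v⟫)
    (hpos : ∀ x ∈ D, ∀ u : EuclideanSpace ℝ (Fin m), u ≠ 0 → 0 < ⟪H x u, u⟫)
    (hHinv : ∀ x ∈ D, (∀ u, Hinv x (H x u) = u) ∧ (∀ u, H x (Hinv x u) = u))
    (hsc : ∀ x ∈ D, ∀ u : EuclideanSpace ℝ (Fin m),
      |iteratedFDeriv ℝ 3 g x ![u, u, u]| ≤ 2 * (⟪H x u, u⟫) ^ ((3:ℝ)/2))
    (xplus : EuclideanSpace ℝ (Fin m)) (hxplus : xplus ∈ D)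
    (hmin : IsMinOn g D xplus) :
    ∀ x ∈ D,
      Real.sqrt ⟪H x (Hinv x (gg x)), Hinv x (gg x)⟫ ≤ 1/2 →
      Real.sqrt ⟪H x (x - xplus), x - xplus⟫ ≤
        2 * Real.sqrt ⟪H x (Hinv x (gg x)), Hinv x (gg x)⟫ :=
  newton_decrement_self_concordant_general D hD hDconv g hgC3 gg H Hinv hgrad hHess hsymm hpos hHinv
    hsc xplus hxplus hmin
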